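/- arXiv:2312.07103 — 8 statements merged into one kernel-verified Lean document; each statement's English description precedes it below -/
import Mathlib

section
/- Let n ∈ ℕ and let V be a nonempty finite set of vectors in {0,1}^{2n}. Then there exists a vector c ∈ {0,1}^{2n} with δ(c,v) ≤ n for every v ∈ V, if and only if there exist x ∈ V and a vector c' ∈ {0,1}^{2n} such that δ(c',x) = n and δ(c',v) ≤ n for every v ∈ V. -/
/-!
Given a center `c` of radius `n`, let `x ∈ V` be a point farthest from `c`, say at distance
`d ≤ n`. Changing `n - d` coordinates of `c` on which `c` agrees with `x` gives a center `c'`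
at distance exactly `n` from `x`, and by the triangle inequality every `v ∈ V` is within
`(n - d) + δ(c, v) ≤ n` of `c'`.
-/

open Function

section Hamming

variable {ι : Type*} [Fintype ι] {β : ι → Type*} [∀ i, DecidableEq (β i)]

theorem hammingDist_update_le_one [DecidableEq ι] (c : ∀ i, β i) (i : ι) (y : β i) :
    hammingDist (update c i y) c ≤ 1 := by
  refine (Finset.card_le_card fun j hj => ?_).trans (Finset.card_singleton i).le
  by_contra hji
  simp [update_of_ne (Finset.notMem_singleton.mp hji)] at hj

theorem hammingDist_update_of_eq [DecidableEq ι] {c x : ∀ i, β i} {i : ι} {y : β i}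
    (hc : c i = x i) (hy : y ≠ x i) :
    hammingDist (update c i y) x = hammingDist c x + 1 := by
  have hfilter : Finset.univ.filter (fun j => update c i y j ≠ x j) =
      insert i (Finset.univ.filter fun j => c j ≠ x j) := by
    ext j
    by_cases hji : j = i
    · subst hji; simp [hy]
    · simp [hji]
  unfold hammingDist
  rw [hfilter, Finset.card_insert_of_notMem (by simp [hc])]

theorem exists_hammingDist_eq_succ [∀ i, Nontrivial (β i)] {c x : ∀ i, β i}
    (h : hammingDist c x < Fintype.card ι) :
    ∃ c', hammingDist c' x = hammingDist c x + 1 ∧ hammingDist c' c ≤ 1 := by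
  classical
  obtain ⟨i, hi⟩ : ∃ i, c i = x i := by
    by_contra! hne
    exact h.ne (by simp [hammingDist, hne])
  obtain ⟨y, hy⟩ := exists_ne (x i)
  exact ⟨update c i y, hammingDist_update_of_eq hi hy, hammingDist_update_le_one c i y⟩

theorem exists_hammingDist_eq_of_le [∀ i, Nontrivial (β i)] {c x : ∀ i, β i} {k : ℕ}
    (hck : hammingDist c x ≤ k) (hk : k ≤ Fintype.card ι) :
    ∃ c', hammingDist c' x = k ∧ hammingDist c' c + hammingDist c x ≤ k := by
  induction k, hck using Nat.le_induction with
  | base => exact ⟨c, rfl, by simp⟩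
  | succ k hck ih =>
    obtain ⟨c', hc'x, hc'c⟩ := ih (by omega)
    obtain ⟨c'', hc''x, hc''c'⟩ := exists_hammingDist_eq_succ (c := c') (x := x) (by omega)
    refine ⟨c'', by omega, ?_⟩
    have := hammingDist_triangle c'' c' c
    omega

end Hamming

/-- There is a center `c ∈ {0,1}^{2n}` within Hamming distance `n` of every vector of a
nonempty finite set `V` iff there are `x ∈ V` and a center `c'` at Hamming distance
exactly `n` from `x` and within distance `n` of every vector of `V`. -/
theorem minimum_radius_farthest_point (n : ℕ) (V : Finset (Fin (2 * n) → Bool))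
    (hV : V.Nonempty) :
    (∃ c : Fin (2 * n) → Bool, ∀ v ∈ V, hammingDist c v ≤ n) ↔
      (∃ x ∈ V, ∃ c' : Fin (2 * n) → Bool,
        hammingDist c' x = n ∧ ∀ v ∈ V, hammingDist c' v ≤ n) := by
  refine ⟨fun ⟨c, hc⟩ => ?_, fun ⟨_, _, c', _, hc'⟩ => ⟨c', hc'⟩⟩
  obtain ⟨x, hx, hfarthest⟩ := V.exists_max_image (hammingDist c) hV
  obtain ⟨c', hc'x, hc'c⟩ :=
    exists_hammingDist_eq_of_le (hc x hx) (by simp only [Fintype.card_fin]; omega)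
  refine ⟨x, hx, c', hc'x, fun v hv => ?_⟩
  calc hammingDist c' v ≤ hammingDist c' c + hammingDist c v := hammingDist_triangle _ _ _
    _ ≤ hammingDist c' c + hammingDist c x := Nat.add_le_add_left (hfarthest v hv) _
    _ ≤ n := hc'c
end

section
/- Let n ∈ ℕ and let V be a finite set of vectors in {0,1}^{2n} containing both the all-zero vector 0_{2n} and the all-one vector 1_{2n}. For v ∈ V let v⁺ ∈ {0,1}^{2n+2} be the vector that agrees with v on the first 2n coordinates and has value 0 at coordinate 2n+1 and value 1 at coordinate 2n+2. Let V_b = {v⁺ : v ∈ V} and V_r = {0_{2n+2}, 1_{2n+2}} (the all-zero and all-one vectors of dimension 2n+2). Then there exists c ∈ {0,1}^{2n} with exactly n ones such that δ(c,v) ≤ n for every v ∈ V, if and only if there exist c⁺ ∈ {0,1}^{2n+2} and r ∈ ℕ such that δ(c⁺,w) ≤ r for every w ∈ V_b and δ(c⁺,w) > r for every w ∈ V_r. -/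
/-!
Splitting off the two new coordinates, `δ(c ++ t, v⁺) = δ(c, v) + δ(t, 01)` and
`δ(c ++ t, b…b) = δ(c, b…b) + δ(t, bb)`. Forwards, `c⁺` with radius `n` works, since `c` is at
distance exactly `n` from both `0` and `1`. Backwards, comparing the blue vectors `0⁺, 1⁺` with the
red vectors `0, 1` gives `δ(t, 01) < δ(t, 00)` and `δ(t, 01) < δ(t, 11)`; as the last two add up
to `2`, this forces `t = 01` and `r = δ(c, 0) = δ(c, 1) = n`.
-/

/-- Extension of a `(2n)`-dimensional binary vector to dimension `2n+2`,
with value `0` (`false`) at coordinate `2n` and value `1` (`true`) at coordinate `2n+1`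
(the two new coordinates, 1-indexed `2n+1` and `2n+2`). -/
def extendVec {n : ℕ} (v : Fin (2 * n) → Bool) : Fin (2 * n + 2) → Bool :=
  fun i => if h : (i : ℕ) < 2 * n then v ⟨i, h⟩ else decide ((i : ℕ) = 2 * n + 1)

open Finset

theorem hammingDist_append {α : Type*} [DecidableEq α] {m k : ℕ} (x y : Fin m → α)
    (x' y' : Fin k → α) :
    hammingDist (Fin.append x x') (Fin.append y y') = hammingDist x y + hammingDist x' y' := by
  simp only [hammingDist, card_filter, Fin.sum_univ_add, Fin.append_left, Fin.append_right]

theorem Fin.append_const {α : Type*} {m k : ℕ} (a : α) :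
    Fin.append (fun _ : Fin m => a) (fun _ : Fin k => a) = fun _ => a := by
  ext i
  induction i using Fin.addCases <;> simp

theorem hammingDist_append_const {α : Type*} [DecidableEq α] {m k : ℕ} (x : Fin m → α)
    (x' : Fin k → α) (a : α) :
    hammingDist (Fin.append x x') (fun _ => a) =
      hammingDist x (fun _ => a) + hammingDist x' (fun _ => a) := by
  rw [← hammingDist_append, Fin.append_const]

theorem hammingDist_false_eq_card {ι : Type*} [Fintype ι] (x : ι → Bool) :
    hammingDist x (fun _ => false) = #{i | x i = true} := by
  simp [hammingDist]

theorem hammingDist_false_add_hammingDist_true {ι : Type*} [Fintype ι] (x : ι → Bool) :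
    hammingDist x (fun _ => false) + hammingDist x (fun _ => true) = Fintype.card ι := by
  simpa [hammingDist] using card_filter_add_card_filter_not (s := univ) (fun i => x i = true)

theorem extendVec_eq_append {n : ℕ} (v : Fin (2 * n) → Bool) :
    extendVec v = Fin.append v ![false, true] := by
  ext i
  induction i using Fin.addCases with
  | left i => simp [extendVec]
  | right j => fin_cases j <;> simp [extendVec]

theorem hammingDist_extendVec {n : ℕ} (c v : Fin (2 * n) → Bool) :
    hammingDist (extendVec c) (extendVec v) = hammingDist c v := by
  simp [extendVec_eq_append, hammingDist_append]

theorem hammingDist_extendVec_const {n : ℕ} (c : Fin (2 * n) → Bool) (b : Bool) :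
    hammingDist (extendVec c) (fun _ => b) = hammingDist c (fun _ => b) + 1 := by
  rw [extendVec_eq_append, hammingDist_append_const]
  cases b <;> rfl

/-- Correctness of the reduction from Rest-MR to 2Red-BHC: for a finite set
`V ⊆ {0,1}^{2n}` containing the all-zero and all-one vectors, there is a center with
exactly `n` ones within Hamming distance `n` of all of `V` iff the instance with blue
vectors `{v⁺ : v ∈ V}` and red vectors `{0_{2n+2}, 1_{2n+2}}` has a separating
hypersphere. -/
theorem restMR_to_2red_BHC (n : ℕ) (V : Finset (Fin (2 * n) → Bool))
    (h0 : (fun _ => false) ∈ V) (h1 : (fun _ => true) ∈ V) :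
    (∃ c : Fin (2 * n) → Bool,
        (Finset.univ.filter (fun i => c i = true)).card = n ∧
        ∀ v ∈ V, hammingDist c v ≤ n) ↔
      (∃ (cp : Fin (2 * n + 2) → Bool) (r : ℕ),
        (∀ w ∈ V.image extendVec, hammingDist cp w ≤ r) ∧
        (∀ w ∈ ({(fun _ => false), (fun _ => true)} : Finset (Fin (2 * n + 2) → Bool)),
          r < hammingDist cp w)) := by
  constructor
  · rintro ⟨c, hc, hV⟩
    have hzero : hammingDist c (fun _ => false) = n := by rw [hammingDist_false_eq_card, hc]
    have hsum := hammingDist_false_add_hammingDist_true c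
    rw [Fintype.card_fin] at hsum
    refine ⟨extendVec c, n, ?_, ?_⟩
    · simpa only [forall_mem_image, hammingDist_extendVec] using hV
    · simp only [mem_insert, mem_singleton, forall_eq_or_imp, forall_eq,
        hammingDist_extendVec_const]
      omega
  · rintro ⟨cp, r, hblue, hred⟩
    obtain ⟨c, t, rfl⟩ : ∃ c t, cp = Fin.append c t := ⟨_, _, Fin.append_castAdd_natAdd.symm⟩
    simp only [forall_mem_image, extendVec_eq_append, hammingDist_append] at hblue
    simp only [mem_insert, mem_singleton, forall_eq_or_imp, forall_eq,
      hammingDist_append_const] at hred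
    have hc := hammingDist_false_add_hammingDist_true c
    have ht := hammingDist_false_add_hammingDist_true t
    have hb0 := hblue h0
    have hb1 := hblue h1
    simp only [Fintype.card_fin] at hc ht
    refine ⟨c, ?_, fun v hv => ?_⟩
    · rw [← hammingDist_false_eq_card]
      omega
    · have := hblue hv
      omega
end

section
/- Let V_R and V_B be finite disjoint sets of vectors in {0,1}^d and let c ∈ {0,1}^d satisfy δ(b,c) < δ(r,c) for every b ∈ V_B and r ∈ V_R. Let B = ⋃_{b ∈ V_B} O(b) and let c' ∈ {0,1}^d be the vector with O(c') = O(c) ∩ B. Then c' also satisfies δ(b,c') < δ(r,c') for every b ∈ V_B and r ∈ V_R, and moreover con(c') ≤ con(c). -/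
/-- The set of coordinates where a binary vector equals `1` (`true`). -/
def ones {d : ℕ} (v : Fin d → Bool) : Finset (Fin d) :=
  Finset.univ.filter (fun i => v i = true)

/-!
Passing from `c` to `c'` only switches off coordinates `i` outside the blue support, where every
blue vector is `0`, i.e. already agrees with `c'`. So each blue distance drops by exactly
`δ(c, c')`, while by the triangle inequality no red distance drops by more than that.
-/

section HammingDist

variable {ι β : Type*} [Fintype ι] [DecidableEq β]

theorem hammingDist_eq_add_of_eq_of_ne {x y z : ι → β} (h : ∀ i, y i ≠ z i → x i = y i) :
    hammingDist x z = hammingDist x y + hammingDist y z := by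
  classical
  have hdisj : Disjoint (Finset.univ.filter fun i => x i ≠ y i)
      (Finset.univ.filter fun i => y i ≠ z i) := by
    simp only [Finset.disjoint_filter]
    exact fun i _ hxy hyz => hxy (h i hyz)
  rw [hammingDist, hammingDist, hammingDist, ← Finset.card_union_of_disjoint hdisj,
    ← Finset.filter_or]
  congr 1
  ext i
  by_cases hyz : y i = z i
  · simp [hyz]
  · simp [hyz, h i hyz]

theorem hammingDist_lt_of_eq_of_ne {b r c c' : ι → β} (h : ∀ i, c' i ≠ c i → b i = c' i)
    (hlt : hammingDist b c < hammingDist r c) : hammingDist b c' < hammingDist r c' := by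
  have hb := hammingDist_eq_add_of_eq_of_ne h
  have hr := hammingDist_triangle r c' c
  omega

end HammingDist

theorem center_restrict_to_blue_support_general (d : ℕ) (VR VB : Finset (Fin d → Bool))
    (c c' : Fin d → Bool)
    (hsep : ∀ b ∈ VB, ∀ r ∈ VR, hammingDist b c < hammingDist r c)
    (hc' : ∀ i, c' i = true ↔ (c i = true ∧ ∃ b ∈ VB, b i = true)) :
    (∀ b ∈ VB, ∀ r ∈ VR, hammingDist b c' < hammingDist r c') ∧
      (ones c').card ≤ (ones c).card := by
  have hblue : ∀ b ∈ VB, ∀ i, c' i ≠ c i → b i = c' i := by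
    intro b hb i hne
    grind
  refine ⟨fun b hb r hr => hammingDist_lt_of_eq_of_ne (hblue b hb) (hsep b hb r hr), ?_⟩
  refine Finset.card_le_card fun i hi => ?_
  simp only [ones, Finset.mem_filter, Finset.mem_univ, true_and] at hi ⊢
  exact ((hc' i).mp hi).1

/-- Restricting a separating center to the union of the supports of the blue vectors
keeps it separating, and does not increase its conciseness. -/
theorem center_restrict_to_blue_support (d : ℕ) (VR VB : Finset (Fin d → Bool))
    (hdisj : Disjoint VR VB) (c c' : Fin d → Bool)
    (hsep : ∀ b ∈ VB, ∀ r ∈ VR, hammingDist b c < hammingDist r c)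
    (hc' : ∀ i, c' i = true ↔ (c i = true ∧ ∃ b ∈ VB, b i = true)) :
    (∀ b ∈ VB, ∀ r ∈ VR, hammingDist b c' < hammingDist r c') ∧
      (ones c').card ≤ (ones c).card :=
  center_restrict_to_blue_support_general d VR VB c c' hsep hc'
end

section
/- Let V_R and V_B be finite disjoint sets of vectors in {0,1}^d and let c ∈ {0,1}^d satisfy δ(b,c) < δ(r,c) for every b ∈ V_B and r ∈ V_R. Let R = ⋃_{r ∈ V_R} O(r) and let c' ∈ {0,1}^d be the vector with c'[i] = c[i] for every coordinate i ∈ R and c'[i] = 1 for every coordinate i ∉ R. Then c' also satisfies δ(b,c') < δ(r,c') for every b ∈ V_B and r ∈ V_R. -/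
/-!
The vector `c'` differs from `c` only on coordinates outside every red support where `c` is `0`;
there every red vector agrees with `c`, so passing from `c` to `c'` increases each red distance by
exactly `δ(c, c')`, whereas by the triangle inequality no blue distance grows by more than that.
-/

theorem hammingDist_eq_add_of_agree_on_ne {ι : Type*} {β : ι → Type*} [Fintype ι]
    [∀ i, DecidableEq (β i)] {x y z : ∀ i, β i} (h : ∀ i, y i ≠ z i → x i = y i) :
    hammingDist x z = hammingDist x y + hammingDist y z := by
  classical
  unfold hammingDist
  rw [← Finset.card_union_of_disjoint]
  · congr 1
    ext i
    simp only [Finset.mem_filter, Finset.mem_union, Finset.mem_univ, true_and]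
    by_cases hyz : y i = z i
    · simp [hyz]
    · simp [hyz, h i hyz]
  · exact Finset.disjoint_filter.2 fun i _ hxy hyz => hxy (h i hyz)

theorem center_fill_outside_red_support_general (d : ℕ) (VR VB : Finset (Fin d → Bool))
    (c c' : Fin d → Bool)
    (hsep : ∀ b ∈ VB, ∀ r ∈ VR, hammingDist b c < hammingDist r c)
    (hc' : ∀ i, ((∃ r ∈ VR, r i = true) → c' i = c i) ∧
                (¬ (∃ r ∈ VR, r i = true) → c' i = true)) :
    ∀ b ∈ VB, ∀ r ∈ VR, hammingDist b c' < hammingDist r c' := by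
  intro b hb r hr
  have hred : ∀ i, c i ≠ c' i → r i = c i := by
    intro i hne
    have hout : ¬ ∃ r ∈ VR, r i = true := fun hin => hne ((hc' i).1 hin).symm
    have hri : r i = false := by simpa using fun h => hout ⟨r, hr, h⟩
    have hci : c i = false := by simpa [(hc' i).2 hout] using hne
    rw [hri, hci]
  calc hammingDist b c' ≤ hammingDist b c + hammingDist c c' := hammingDist_triangle b c c'
    _ < hammingDist r c + hammingDist c c' := Nat.add_lt_add_right (hsep b hb r hr) _
    _ = hammingDist r c' := (hammingDist_eq_add_of_agree_on_ne hred).symm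

/-- Setting a separating center to `1` on all coordinates outside the union of the
supports of the red vectors keeps it separating. -/
theorem center_fill_outside_red_support (d : ℕ) (VR VB : Finset (Fin d → Bool))
    (hdisj : Disjoint VR VB) (c c' : Fin d → Bool)
    (hsep : ∀ b ∈ VB, ∀ r ∈ VR, hammingDist b c < hammingDist r c)
    (hc' : ∀ i, ((∃ r ∈ VR, r i = true) → c' i = c i) ∧
                (¬ (∃ r ∈ VR, r i = true) → c' i = true)) :
    ∀ b ∈ VB, ∀ r ∈ VR, hammingDist b c' < hammingDist r c' :=
  center_fill_outside_red_support_general d VR VB c c' hsep hc'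
end

section
/- Let r, b, c, c' ∈ {0,1}^d be vectors with O(c) ⊆ O(c'). Suppose δ(r,c) ≤ δ(b,c) and δ(b,c') < δ(r,c'). Then O(c') contains at least one coordinate from the set B = O(b) \ (O(r) ∪ O(c)); i.e., O(c') ∩ (O(b) \ (O(r) ∪ O(c))) ≠ ∅. -/
/-!
Passing from `c` to `c'` only switches coordinates from `0` to `1`. At a switched coordinate
outside `O(b) \ (O(r) ∪ O(c))` we have `b i ≤ r i`, so the switch changes `δ(b, ·)` by at least
as much as `δ(r, ·)`. Hence `δ(b, c') - δ(r, c') ≥ δ(b, c) - δ(r, c) ≥ 0` unless `c'` switches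
some coordinate of that set.
-/

open Finset

theorem hammingDist_eq_sum_ite {ι : Type*} [Fintype ι] {β : ι → Type*} [∀ i, DecidableEq (β i)]
    (x y : ∀ i, β i) : hammingDist x y = ∑ i, if x i ≠ y i then 1 else 0 :=
  card_filter _ _

theorem Bool.ite_ne_add_ite_ne_le {r b c c' : Bool} (hext : c = true → c' = true)
    (hB : ¬(c' = true ∧ b = true ∧ r = false ∧ c = false)) :
    (if r ≠ c' then 1 else 0) + (if b ≠ c then 1 else 0) ≤
      (if b ≠ c' then 1 else 0) + (if r ≠ c then 1 else 0) := by
  revert hext hB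
  cases r <;> cases b <;> cases c <;> cases c' <;> decide

theorem exists_of_hammingDist_add_lt_hammingDist_add {ι : Type*} [Fintype ι] {r b c c' : ι → Bool}
    (hext : ∀ i, c i = true → c' i = true)
    (hlt : hammingDist b c' + hammingDist r c < hammingDist r c' + hammingDist b c) :
    ∃ i, c' i = true ∧ b i = true ∧ r i = false ∧ c i = false := by
  contrapose! hlt with hB
  simp only [hammingDist_eq_sum_ite, ← sum_add_distrib]
  exact sum_le_sum fun i _ => Bool.ite_ne_add_ite_ne_le (hext i) fun ⟨h₁, h₂, h₃, h₄⟩ =>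
    hB i h₁ h₂ h₃ h₄

/-- Branching lemma: if a red vector `r` is at least as close to the center `c` as a blue
vector `b`, then any extension `c'` of `c` (i.e. `O(c) ⊆ O(c')`) placing `b` strictly
closer than `r` must be `1` at some coordinate where `b` is `1` but both `r` and `c`
are `0`. -/
theorem branching_lemma (d : ℕ) (r b c c' : Fin d → Bool)
    (hext : ∀ i, c i = true → c' i = true)
    (h1 : hammingDist r c ≤ hammingDist b c)
    (h2 : hammingDist b c' < hammingDist r c') :
    ∃ i, c' i = true ∧ b i = true ∧ r i = false ∧ c i = false :=
  exists_of_hammingDist_add_lt_hammingDist_add hext (by omega)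
end

section
/- Let G be a simple graph on a finite vertex set W with |W| = N, let k ∈ ℕ with N ≥ 2k, and set D = N − 2k + 1. Consider coordinates indexed by W ⊎ {1,…,D}. For each edge e = {u,v} of G, let r_e ∈ {0,1}^{W ⊎ {1,…,D}} be the vector with value 1 exactly at the coordinates d_u, d_v and at all D dummy coordinates; let r be the vector with value 1 exactly at all D dummy coordinates; and let b be the vector with value 1 exactly at all vertex coordinates d_w, w ∈ W. Then G has an independent set of size at least k if and only if there exists c ∈ {0,1}^{W ⊎ {1,…,D}} with con(c) ≤ k such that δ(b,c) < δ(r_e,c) for every edge e of G and δ(b,c) < δ(r,c). -/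
/-- The red vector of an edge `{u,v}`: value `1` exactly at the vertex coordinates
`d_u`, `d_v` and at all `D` dummy coordinates. -/
def edgeRedVec {W : Type*} [DecidableEq W] (D : ℕ) (u v : W) : W ⊕ Fin D → Bool :=
  Sum.elim (fun w => decide (w = u ∨ w = v)) (fun _ => true)

/-- The extra red vector: value `1` exactly at all `D` dummy coordinates. -/
def dummyRedVec (W : Type*) (D : ℕ) : W ⊕ Fin D → Bool :=
  Sum.elim (fun _ => false) (fun _ => true)

/-- The single blue vector: value `1` exactly at all vertex coordinates. -/
def allVertexBlueVec (W : Type*) (D : ℕ) : W ⊕ Fin D → Bool :=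
  Sum.elim (fun _ => true) (fun _ => false)

/-!
Write a center `c` as the pair `(S, T)` of its supports on the vertex and on the dummy
coordinates. Then `δ(b,c) = N - |S| + |T|`, `δ(r,c) = |S| + D - |T|` and
`δ(r_{uv},c) = δ(r,c) + 2 - 2|{u,v} ∩ S|`. Under `|S| + |T| ≤ k`, the choice
`D = N - 2k + 1` makes `δ(b,c) < δ(r,c)` equivalent to `T = ∅ ∧ |S| = k`, and then
`δ(b,c) < δ(r_{uv},c)` says exactly that `u` and `v` are not both in `S`.
-/

open Finset

theorem card_pair_inter_le_one {α : Type*} [DecidableEq α] {u v : α} {S : Finset α} (huv : u ≠ v)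
    (h : ¬(u ∈ S ∧ v ∈ S)) : #({u, v} ∩ S) ≤ 1 := by
  have hlt : {u, v} ∩ S ⊂ {u, v} :=
    inf_lt_left.2 fun hsub => h (insert_subset_iff.1 hsub |>.imp_right singleton_subset_iff.1)
  have := card_lt_card hlt
  rw [card_pair huv] at this
  omega

section Hamming

variable {α β : Type*} [Fintype α] [Fintype β]

theorem hammingDist_sumElim {γ : Type*} [DecidableEq γ] (x₁ y₁ : α → γ) (x₂ y₂ : β → γ) :
    hammingDist (Sum.elim x₁ x₂) (Sum.elim y₁ y₂) = hammingDist x₁ y₁ + hammingDist x₂ y₂ := by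
  simp only [hammingDist, card_filter, Fintype.sum_sum_type, Sum.elim_inl, Sum.elim_inr]
  rfl

theorem hammingDist_decide_mem_add [DecidableEq α] (A B : Finset α) :
    hammingDist (fun i => decide (i ∈ A)) (fun i => decide (i ∈ B)) + 2 * #(A ∩ B) =
      #A + #B := by
  have hdiff : ({i | decide (i ∈ A) ≠ decide (i ∈ B)} : Finset α) = (A \ B) ∪ (B \ A) := by
    ext i; by_cases hA : i ∈ A <;> by_cases hB : i ∈ B <;> simp [hA, hB]
  have hA := card_sdiff_add_card_inter A B
  have hB := card_sdiff_add_card_inter B A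
  rw [inter_comm] at hB
  rw [hammingDist, hdiff, card_union_of_disjoint disjoint_sdiff_sdiff]
  omega

end Hamming

def sumIndicator {α β : Type*} [DecidableEq α] [DecidableEq β] (A : Finset α) (B : Finset β) :
    α ⊕ β → Bool :=
  Sum.elim (fun a => decide (a ∈ A)) (fun b => decide (b ∈ B))

section SumIndicator

variable {α β : Type*} [Fintype α] [Fintype β] [DecidableEq α] [DecidableEq β]

theorem exists_eq_sumIndicator (c : α ⊕ β → Bool) : ∃ A B, c = sumIndicator A B := by
  refine ⟨({a | c (.inl a)} : Finset α), ({b | c (.inr b)} : Finset β), funext fun i => ?_⟩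
  cases i <;> simp [sumIndicator]

theorem card_filter_sumIndicator (A : Finset α) (B : Finset β) :
    #{i | sumIndicator A B i = true} = #A + #B := by
  rw [card_filter, Fintype.sum_sum_type]
  simp [sumIndicator]

theorem hammingDist_sumIndicator_add (A S : Finset α) (B T : Finset β) :
    hammingDist (sumIndicator A B) (sumIndicator S T) + 2 * (#(A ∩ S) + #(B ∩ T)) =
      #A + #B + (#S + #T) := by
  have h₁ := hammingDist_decide_mem_add A S
  have h₂ := hammingDist_decide_mem_add B T
  rw [sumIndicator, sumIndicator, hammingDist_sumElim]
  omega

end SumIndicator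

section Reduction

variable {W : Type*} [Fintype W] [DecidableEq W] {D : ℕ}

theorem hammingDist_allVertexBlueVec (S : Finset W) (T : Finset (Fin D)) :
    hammingDist (allVertexBlueVec W D) (sumIndicator S T) + #S = Fintype.card W + #T := by
  have h := hammingDist_sumIndicator_add univ S ∅ T
  have hb : allVertexBlueVec W D = sumIndicator univ ∅ := by
    funext i; cases i <;> simp [allVertexBlueVec, sumIndicator]
  simp only [univ_inter, empty_inter, card_empty, card_univ] at h
  rw [hb]
  omega

theorem hammingDist_dummyRedVec (S : Finset W) (T : Finset (Fin D)) :
    hammingDist (dummyRedVec W D) (sumIndicator S T) + #T = #S + D := by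
  have h := hammingDist_sumIndicator_add ∅ S univ T
  have hr : dummyRedVec W D = sumIndicator ∅ univ := by
    funext i; cases i <;> simp [dummyRedVec, sumIndicator]
  simp only [univ_inter, empty_inter, card_empty, card_univ, Fintype.card_fin] at h
  rw [hr]
  omega

theorem hammingDist_edgeRedVec {u v : W} (huv : u ≠ v) (S : Finset W) (T : Finset (Fin D)) :
    hammingDist (edgeRedVec D u v) (sumIndicator S T) + 2 * #({u, v} ∩ S) + #T =
      2 + #S + D := by
  have h := hammingDist_sumIndicator_add {u, v} S univ T
  have hr : edgeRedVec D u v = sumIndicator {u, v} univ := by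
    funext i; cases i <;> simp [edgeRedVec, sumIndicator]
  simp only [univ_inter, card_univ, Fintype.card_fin, card_pair huv] at h
  rw [hr]
  omega

end Reduction

/-- Correctness of the reduction from Independent Set to Concise Binary Hypersphere
Classification with one blue vector: with `N = |W|`, `N ≥ 2k` and `D = N − 2k + 1`,
the graph `G` has an independent set of size at least `k` iff there is a center `c` of
conciseness at most `k` such that the blue vector `b` is strictly closer to `c` in
Hamming distance than every edge vector `r_e` and than the extra red vector `r`. -/
theorem independentSet_iff_concise_center {W : Type*} [Fintype W] [DecidableEq W]
    (G : SimpleGraph W) (N k : ℕ) (hN : Fintype.card W = N) (hk : 2 * k ≤ N)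
    (D : ℕ) (hD : D = N - 2 * k + 1) :
    (∃ S : Finset W, k ≤ S.card ∧ ∀ u ∈ S, ∀ v ∈ S, ¬ G.Adj u v) ↔
      (∃ c : W ⊕ Fin D → Bool,
        (Finset.univ.filter (fun i => c i = true)).card ≤ k ∧
        (∀ u v : W, G.Adj u v →
          hammingDist (allVertexBlueVec W D) c < hammingDist (edgeRedVec D u v) c) ∧
        hammingDist (allVertexBlueVec W D) c < hammingDist (dummyRedVec W D) c) := by
  constructor
  · rintro ⟨S₀, hkS₀, hS₀⟩
    obtain ⟨S, hSS₀, rfl⟩ := exists_subset_card_eq hkS₀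
    have hT : #(∅ : Finset (Fin D)) = 0 := card_empty
    have hblue := hammingDist_allVertexBlueVec S (∅ : Finset (Fin D))
    have hred := hammingDist_dummyRedVec S (∅ : Finset (Fin D))
    refine ⟨sumIndicator S ∅, by simp [card_filter_sumIndicator], fun u v huv => ?_, by omega⟩
    have hS := card_pair_inter_le_one huv.ne fun h => hS₀ u (hSS₀ h.1) v (hSS₀ h.2) huv
    have hedgeRed := hammingDist_edgeRedVec huv.ne S (∅ : Finset (Fin D))
    omega
  · rintro ⟨c, hcon, hedge, hdummy⟩
    obtain ⟨S, T, rfl⟩ := exists_eq_sumIndicator c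
    rw [card_filter_sumIndicator] at hcon
    have hblue := hammingDist_allVertexBlueVec S T
    have hred := hammingDist_dummyRedVec S T
    refine ⟨S, by omega, fun u hu v hv huv => ?_⟩
    have hS : #({u, v} ∩ S) = 2 := by
      rw [inter_eq_left.2 (insert_subset hu (singleton_subset_iff.2 hv)), card_pair huv.ne]
    have hedgeRed := hammingDist_edgeRedVec huv.ne S T
    have hcloser := hedge u v huv
    omega
end

section
/- Let V_R and V_B be finite disjoint sets of vectors in {0,1}^d, and define an equivalence relation on coordinates by i ~ j iff v[i] = v[j] for every v ∈ V_R ∪ V_B (i.e., the columns i and j of the data matrix are equal). Suppose c ∈ {0,1}^d satisfies δ(b,c) < δ(r,c) for every b ∈ V_B and r ∈ V_R, and suppose c' ∈ {0,1}^d satisfies |O(c') ∩ C| = |O(c) ∩ C| for every ~-equivalence class C of coordinates. Then c' also satisfies δ(b,c') < δ(r,c') for every b ∈ V_B and r ∈ V_R. -/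
/-!
The Hamming distance from a data vector `v` to a center splits as a sum over the column
classes. On a class `v` is constant, so the mismatches there are the `1`'s of the center in
the class (if `v` is `0` on it) or the `0`'s (if `v` is `1` on it); either way their number
depends only on how many `1`'s the center places in the class. Hence `c` and `c'` are at the
same distance from every data vector.
-/

open Finset

theorem Finset.card_filter_ne_eq_of_card_filter_eq {ι : Type*} (s : Finset ι) {v x y : ι → Bool}
    {b : Bool} (hv : ∀ i ∈ s, v i = b) (hxy : #{i ∈ s | x i = true} = #{i ∈ s | y i = true}) :
    #{i ∈ s | v i ≠ x i} = #{i ∈ s | v i ≠ y i} := by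
  have hne (z : ι → Bool) : {i ∈ s | v i ≠ z i} = {i ∈ s | z i ≠ b} :=
    filter_congr fun i hi => by rw [hv i hi, ne_comm]
  rw [hne x, hne y]
  cases b
  · simpa only [ne_eq, Bool.not_eq_false] using hxy
  · have hx := card_filter_add_card_filter_not (s := s) (fun i => x i = true)
    have hy := card_filter_add_card_filter_not (s := s) (fun i => y i = true)
    simp only [ne_eq]
    omega

theorem hammingDist_eq_of_card_fiber_eq {ι κ : Type*} [Fintype ι] [DecidableEq κ] (g : ι → κ)
    {v x y : ι → Bool} (hv : ∀ i j, g i = g j → v i = v j)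
    (hxy : ∀ j, #{i | g i = g j ∧ x i = true} = #{i | g i = g j ∧ y i = true}) :
    hammingDist v x = hammingDist v y := by
  have hfiber (z : ι → Bool) :
      hammingDist v z = ∑ k ∈ univ.image g, #{i | g i = k ∧ v i ≠ z i} := by
    rw [hammingDist, card_eq_sum_card_fiberwise fun i _ => mem_image_of_mem g (mem_univ i)]
    simp only [filter_filter, and_comm]
  rw [hfiber x, hfiber y]
  refine sum_congr rfl fun k hk => ?_
  obtain ⟨j, -, rfl⟩ := mem_image.mp hk
  simp only [← filter_filter] at hxy ⊢
  exact card_filter_ne_eq_of_card_filter_eq _ (fun i hi => hv i j (mem_filter.mp hi).2) (hxy j)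

theorem column_class_exchange_general (d : ℕ) (VR VB : Finset (Fin d → Bool))
    (c c' : Fin d → Bool)
    (hsep : ∀ b ∈ VB, ∀ r ∈ VR, hammingDist b c < hammingDist r c)
    (hclass : ∀ j : Fin d,
      (Finset.univ.filter (fun i : Fin d =>
          (∀ v ∈ VR ∪ VB, v i = v j) ∧ c' i = true)).card =
      (Finset.univ.filter (fun i : Fin d =>
          (∀ v ∈ VR ∪ VB, v i = v j) ∧ c i = true)).card) :
    ∀ b ∈ VB, ∀ r ∈ VR, hammingDist b c' < hammingDist r c' := by
  classical
  let column (i : Fin d) : ↥(VR ∪ VB) → Bool := fun v => v.1 i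
  have column_eq_iff (i j : Fin d) : column i = column j ↔ ∀ v ∈ VR ∪ VB, v i = v j := by
    simp [column, funext_iff]
  have hdist : ∀ v ∈ VR ∪ VB, hammingDist v c' = hammingDist v c := fun v hv =>
    hammingDist_eq_of_card_fiber_eq column
      (fun i j hij => (column_eq_iff i j).mp hij v hv)
      (fun j => by simpa only [column_eq_iff] using hclass j)
  intro b hb r hr
  rw [hdist b (mem_union_right _ hb), hdist r (mem_union_left _ hr)]
  exact hsep b hb r hr

/-- Exchange property behind the ILP-based FPT algorithm for BHC parameterized by the
number of vectors: two coordinates `i, j` are equivalent if every data vector agrees on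
them (equal columns); if `c` is a separating center and `c'` places the same number of
`1`'s inside every column-equivalence class as `c` does, then `c'` is also separating. -/
theorem column_class_exchange (d : ℕ) (VR VB : Finset (Fin d → Bool))
    (hdisj : Disjoint VR VB) (c c' : Fin d → Bool)
    (hsep : ∀ b ∈ VB, ∀ r ∈ VR, hammingDist b c < hammingDist r c)
    (hclass : ∀ j : Fin d,
      (Finset.univ.filter (fun i : Fin d =>
          (∀ v ∈ VR ∪ VB, v i = v j) ∧ c' i = true)).card =
      (Finset.univ.filter (fun i : Fin d =>
          (∀ v ∈ VR ∪ VB, v i = v j) ∧ c i = true)).card) :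
    ∀ b ∈ VB, ∀ r ∈ VR, hammingDist b c' < hammingDist r c' :=
  column_class_exchange_general d VR VB c c' hsep hclass
end

section
/- Let V_R and V_B be finite disjoint sets of vectors in {0,1}^d such that con(v) ≤ 3 for every v ∈ V_R ∪ V_B, and let c ∈ {0,1}^d satisfy δ(b,c) < δ(r,c) for every b ∈ V_B and r ∈ V_R. If some red vector r ∈ V_R satisfies |O(r)| − 2·|O(r) ∩ O(c)| ≤ −1, then every blue vector b ∈ V_B satisfies |O(b)| ≥ 2 and O(b) ⊆ O(c). -/
lemma ham_eq {d : ℕ} (v c : Fin d → Bool) :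
    hammingDist v c + 2 * (ones v ∩ ones c).card = (ones v).card + (ones c).card := by
  unfold hammingDist ones
  rw [← Finset.filter_and]
  simp only [Finset.card_filter]
  rw [Finset.mul_sum, ← Finset.sum_add_distrib, ← Finset.sum_add_distrib]
  apply Finset.sum_congr rfl
  intro i _
  cases h1 : v i <;> cases h2 : c i <;> simp [h1, h2]

/-- Case `M_r ≤ −1` of the conciseness-3 algorithm: if all data vectors have at most
three `1`'s, `c` is a separating center, and some red vector `r` satisfies
`|O(r)| − 2·|O(r) ∩ O(c)| ≤ −1`, then every blue vector `b` has `|O(b)| ≥ 2` and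
`O(b) ⊆ O(c)`. -/
theorem conciseness3_case_Mr_neg (d : ℕ) (VR VB : Finset (Fin d → Bool))
    (hdisj : Disjoint VR VB)
    (hcon : ∀ v ∈ VR ∪ VB, (ones v).card ≤ 3)
    (c : Fin d → Bool)
    (hsep : ∀ b ∈ VB, ∀ r ∈ VR, hammingDist b c < hammingDist r c)
    (r : Fin d → Bool) (hr : r ∈ VR)
    (hMr : ((ones r).card : ℤ) - 2 * ((ones r ∩ ones c).card : ℤ) ≤ -1) :
    ∀ b ∈ VB, 2 ≤ (ones b).card ∧ ones b ⊆ ones c := by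
  intro b hb
  have hlt := hsep b hb r hr
  have h1 := ham_eq b c
  have h2 := ham_eq r c
  have hMr' : (ones r).card + 1 ≤ 2 * (ones r ∩ ones c).card := by
    omega
  have hsub : (ones b ∩ ones c).card ≤ (ones b).card :=
    Finset.card_le_card (Finset.inter_subset_left)
  have hb3 : (ones b).card ≤ 3 := hcon b (Finset.mem_union_right _ hb)
  have heq : (ones b ∩ ones c).card = (ones b).card := by omega
  have hsubset : ones b ⊆ ones c := by
    have h := Finset.eq_of_subset_of_card_le (Finset.inter_subset_left : ones b ∩ ones c ⊆ ones b)
      (le_of_eq heq.symm)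
    intro i hi
    have : i ∈ ones b ∩ ones c := by rw [h]; exact hi
    exact (Finset.mem_inter.mp this).2
  exact ⟨by omega, hsubset⟩
end
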